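/- arXiv:1409.3050 — 2 statements merged into one kernel-verified Lean document; each statement's English description precedes it below -/
import Mathlib

section
/- Binary helper example, converse direction: Let ρ ∈ [0,1/2], let X ~ Bernoulli(1/2) and Z ~ Bernoulli(ρ) be independent binary random variables, and let V := X ⊕ Z (modulo-2 addition). Let A be any finite-valued random variable such that the Markov chain X ↔ V ↔ A holds (i.e., A is conditionally independent of X given V). Then there exists α ∈ [0,1/2] such that H(X|A) = h(α ⋆ ρ) and I(V;A) ≥ 1 − h(α), where h is the binary entropy function and a ⋆ b := a(1−b) + (1−a)b. -/
open scoped Classical BigOperators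

/-- `p` is a probability mass function on the finite alphabet `α`. -/
def IsPMF {α : Type*} [Fintype α] (p : α → ℝ) : Prop :=
  (∀ a, 0 ≤ p a) ∧ ∑ a, p a = 1

/-- Pushforward of a pmf along a map. -/
noncomputable def pushPMF {α β : Type*} [Fintype α] (p : α → ℝ) (f : α → β) : β → ℝ :=
  fun b => ∑ a, if f a = b then p a else 0

/-- Shannon entropy (in bits) of a pmf. -/
noncomputable def ent {α : Type*} [Fintype α] (p : α → ℝ) : ℝ :=
  ∑ a, -(p a * Real.logb 2 (p a))

/-- Conditional entropy `H(A|B)` of a joint pmf on `α × β`. -/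
noncomputable def condEnt {α β : Type*} [Fintype α] [Fintype β] (p : α × β → ℝ) : ℝ :=
  ent p - ent (pushPMF p Prod.snd)

/-- Mutual information `I(A;B)` of a joint pmf on `α × β`. -/
noncomputable def mutInfo {α β : Type*} [Fintype α] [Fintype β] (p : α × β → ℝ) : ℝ :=
  ent (pushPMF p Prod.fst) + ent (pushPMF p Prod.snd) - ent p

/-- `B ↔ C ↔ D` is a Markov chain under the pmf `p` on `Ω`: `B` and `D` are conditionally
independent given `C`, i.e. `P(b,c,d)·P(c) = P(b,c)·P(c,d)` for all `b, c, d`. -/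
def MarkovChain {Ω β γ δ : Type*} [Fintype Ω] (p : Ω → ℝ)
    (B : Ω → β) (C : Ω → γ) (D : Ω → δ) : Prop :=
  ∀ (b : β) (c : γ) (d : δ),
    pushPMF p (fun ω => (B ω, C ω, D ω)) (b, c, d) * pushPMF p C c
      = pushPMF p (fun ω => (B ω, C ω)) (b, c) * pushPMF p (fun ω => (C ω, D ω)) (c, d)

/-- The binary entropy function (in bits); `Real.logb 2 0 = 0`, so `binEnt 0 = 0`. -/
noncomputable def binEnt (a : ℝ) : ℝ :=
  -(a * Real.logb 2 a) - (1 - a) * Real.logb 2 (1 - a)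

/-- Binary convolution `a ⋆ b := a(1−b) + (1−a)b`. -/
def binConv (a b : ℝ) : ℝ := a * (1 - b) + (1 - a) * b

/-- The `Bernoulli(t)` pmf on `Bool`. -/
def bern (t : ℝ) : Bool → ℝ := fun b => if b then t else 1 - t

/-!
Write `q` for the law of `A` and `β a := P(V = 1 | A = a)`. The Markov chain makes `X` the
output of a binary symmetric channel with crossover `ρ` fed by `V`, so
`P(X = 1 | A = a) = β a ⋆ ρ`; hence `H(X|A) = ∑ q a · h(β a ⋆ ρ)`, and, `V` being uniform,
`I(V;A) = 1 - ∑ q a · h(β a)`. The intermediate value theorem gives `α ∈ [0, 1/2]` with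
`h(α ⋆ ρ) = H(X|A)`, and it remains to show `∑ q a · h(β a) ≤ h(α)` (Mrs. Gerber's lemma).
For `0 < α < 1/2` the curve `t ↦ (h t, h(t ⋆ ρ))` lies above its tangent at `α`, because its
slope `(1 - 2ρ) h'(t ⋆ ρ) / h'(t)` increases on `(0, 1/2)`; averaging the tangent inequality
over `A` gives the claim. At `α = 0` strict concavity of `h` forces every `β a` into `{0, 1}`,
and `α = 1/2` is trivial.
-/

open Real Set Function

section FinitePMF

variable {α β γ : Type*} [Fintype α]

lemma ent_eq_sum_negMulLog_div (p : α → ℝ) : ent p = (∑ a, negMulLog (p a)) / log 2 := by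
  simp only [ent, negMulLog, logb, Finset.sum_div]
  congr 1 with a
  ring

lemma binEnt_eq_binEntropy_div (a : ℝ) : binEnt a = binEntropy a / log 2 := by
  simp only [binEnt, binEntropy_eq_negMulLog_add_negMulLog_one_sub, negMulLog, logb]
  ring

lemma ent_uniform [Nonempty α] :
    ent (fun _ : α => (Fintype.card α : ℝ)⁻¹) = logb 2 (Fintype.card α) := by
  have hcard : (Fintype.card α : ℝ) ≠ 0 := by positivity
  simp only [ent, logb_inv, Finset.sum_const, Finset.card_univ, nsmul_eq_mul]
  field_simp

lemma pushPMF_nonneg {p : α → ℝ} (hp : ∀ a, 0 ≤ p a) (f : α → β) (b : β) :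
    0 ≤ pushPMF p f b :=
  Finset.sum_nonneg fun a _ => by split_ifs <;> simp [hp a]

lemma sum_pushPMF [Fintype β] (p : α → ℝ) (f : α → β) : ∑ b, pushPMF p f b = ∑ a, p a := by
  simp only [pushPMF]
  rw [Finset.sum_comm]
  simp

lemma pushPMF_pushPMF [Fintype β] (p : α → ℝ) (f : α → β) (g : β → γ) :
    pushPMF (pushPMF p f) g = pushPMF p (fun a => g (f a)) := by
  ext c
  simp only [pushPMF, ← Finset.sum_filter]
  rw [← Finset.sum_biUnion]
  · congr 1; ext a; simp
  · exact fun b _ b' _ h => Finset.disjoint_filter.2 fun a _ h₁ h₂ => h (h₁.symm.trans h₂)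

lemma pushPMF_apply_of_injective {f : α → β} (hf : Injective f) (p : α → ℝ) (a : α) :
    pushPMF p f (f a) = p a := by
  simp [pushPMF, hf.eq_iff]

lemma pushPMF_snd_apply [Fintype β] (m : α × β → ℝ) (b : β) :
    pushPMF m Prod.snd b = ∑ a, m (a, b) := by
  simp [pushPMF, Fintype.sum_prod_type]

lemma pushPMF_fst_snd_snd_apply [Fintype β] [Fintype γ] (m : α × β × γ → ℝ) (a : α) (c : γ) :
    pushPMF m (fun w => (w.1, w.2.2)) (a, c) = ∑ b, m (a, b, c) := by
  simp [pushPMF, Fintype.sum_prod_type, Prod.ext_iff, ite_and]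

end FinitePMF

lemma condEnt_eq_sum_mul_binEntropy_div {𝒜 : Type*} [Fintype 𝒜] (m : Bool × 𝒜 → ℝ)
    (q b : 𝒜 → ℝ) (htrue : ∀ a, m (true, a) = q a * b a)
    (hfalse : ∀ a, m (false, a) = q a * (1 - b a)) :
    condEnt m = (∑ a, q a * binEntropy (b a)) / log 2 := by
  have hsnd : ∀ a, pushPMF m Prod.snd a = q a := fun a => by
    rw [pushPMF_snd_apply, Fintype.sum_bool, htrue, hfalse]; ring
  rw [condEnt, ent_eq_sum_negMulLog_div, ent_eq_sum_negMulLog_div, ← sub_div,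
    Fintype.sum_prod_type_right, ← Finset.sum_sub_distrib]
  congr 1
  refine Finset.sum_congr rfl fun a _ => ?_
  rw [Fintype.sum_bool, htrue, hfalse, hsnd, negMulLog_mul, negMulLog_mul,
    binEntropy_eq_negMulLog_add_negMulLog_one_sub]
  ring

lemma MarkovChain.pushPMF_apply_eq {Ω β γ δ : Type*} [Fintype Ω] {p : Ω → ℝ} {B : Ω → β}
    {C : Ω → γ} {D : Ω → δ} (h : MarkovChain p B C D) {b : β} {c : γ} (d : δ)
    (hc : pushPMF p C c ≠ 0) :
    pushPMF p (fun ω => (B ω, C ω, D ω)) (b, c, d)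
      = pushPMF p (fun ω => (B ω, C ω)) (b, c) / pushPMF p C c
        * pushPMF p (fun ω => (C ω, D ω)) (c, d) := by
  rw [div_mul_eq_mul_div, eq_div_iff hc]
  exact h b c d

lemma exists_mem_Icc_eq_add_mul {x y : ℝ} (hx : 0 ≤ x) (hy : 0 ≤ y) :
    ∃ b ∈ Icc (0 : ℝ) 1, x = (x + y) * b ∧ y = (x + y) * (1 - b) := by
  rcases (add_nonneg hx hy).eq_or_lt with hxy | hxy
  · exact ⟨0, by simp, by linarith, by linarith⟩
  · refine ⟨x / (x + y), ⟨by positivity, (div_le_one hxy).2 (by linarith)⟩, ?_, ?_⟩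
    · field_simp
    · field_simp; ring

section XorChannel

variable {𝒜 : Type*} [Fintype 𝒜] {ρ : ℝ} {p : (Bool × Bool) × 𝒜 → ℝ}

lemma pushPMF_fst_xor_apply (hmarg : ∀ x z : Bool, pushPMF p Prod.fst (x, z) = 1 / 2 * bern ρ z)
    (x v : Bool) :
    pushPMF p (fun w => (w.1.1, xor w.1.1 w.1.2)) (x, v) = 1 / 2 * bern ρ (xor x v) := by
  have hinj : Injective fun xz : Bool × Bool => (xz.1, xor xz.1 xz.2) := by
    rintro ⟨x, z⟩ ⟨x', z'⟩ h
    simp only [Prod.mk.injEq] at h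
    obtain ⟨rfl, h⟩ := h
    simp_all
  rw [← pushPMF_pushPMF p Prod.fst (fun xz : Bool × Bool => (xz.1, xor xz.1 xz.2)), ← hmarg]
  simpa using pushPMF_apply_of_injective hinj _ (x, xor x v)

lemma pushPMF_xor_apply (hmarg : ∀ x z : Bool, pushPMF p Prod.fst (x, z) = 1 / 2 * bern ρ z)
    (v : Bool) : pushPMF p (fun w => xor w.1.1 w.1.2) v = 1 / 2 := by
  rw [← pushPMF_pushPMF p (fun w => (w.1.1, xor w.1.1 w.1.2)) Prod.snd, pushPMF_snd_apply,
    Fintype.sum_bool, pushPMF_fst_xor_apply hmarg, pushPMF_fst_xor_apply hmarg]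
  cases v <;> simp only [bern] <;> norm_num <;> ring

lemma exists_condEnt_mutInfo_eq_sum_binEntropy (hp : IsPMF p)
    (hmarg : ∀ x z : Bool, pushPMF p Prod.fst (x, z) = 1 / 2 * bern ρ z)
    (hmc : MarkovChain p (fun w => w.1.1) (fun w => xor w.1.1 w.1.2) (fun w => w.2)) :
    ∃ q β : 𝒜 → ℝ, (∀ a, 0 ≤ q a) ∧ ∑ a, q a = 1 ∧ (∀ a, β a ∈ Icc (0 : ℝ) 1) ∧
      condEnt (pushPMF p (fun w => (w.1.1, w.2)))
        = (∑ a, q a * binEntropy (binConv (β a) ρ)) / log 2 ∧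
      mutInfo (pushPMF p (fun w => (xor w.1.1 w.1.2, w.2)))
        = 1 - (∑ a, q a * binEntropy (β a)) / log 2 := by
  set r := pushPMF p (fun w => (xor w.1.1 w.1.2, w.2)) with hr
  have hr0 : ∀ w, 0 ≤ r w := pushPMF_nonneg hp.1 _
  set q : 𝒜 → ℝ := fun a => r (true, a) + r (false, a)
  obtain ⟨β, hβ, hrβ⟩ : ∃ β : 𝒜 → ℝ, (∀ a, β a ∈ Icc (0 : ℝ) 1) ∧
      ∀ a, r (true, a) = q a * β a ∧ r (false, a) = q a * (1 - β a) := by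
    choose β hβ hrβ using fun a => exists_mem_Icc_eq_add_mul (hr0 (true, a)) (hr0 (false, a))
    exact ⟨β, hβ, hrβ⟩
  have hXVA : ∀ x v a, pushPMF p (fun w => (w.1.1, xor w.1.1 w.1.2, w.2)) (x, v, a)
      = bern ρ (xor x v) * r (v, a) := by
    intro x v a
    rw [hmc.pushPMF_apply_eq a (by rw [pushPMF_xor_apply hmarg]; norm_num),
      pushPMF_fst_xor_apply hmarg, pushPMF_xor_apply hmarg]
    ring
  have hXA : ∀ x a, pushPMF p (fun w => (w.1.1, w.2)) (x, a)
      = bern ρ (xor x true) * r (true, a) + bern ρ (xor x false) * r (false, a) := by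
    intro x a
    rw [← pushPMF_pushPMF p (fun w => (w.1.1, xor w.1.1 w.1.2, w.2)) (fun w => (w.1, w.2.2)),
      pushPMF_fst_snd_snd_apply, Fintype.sum_bool, hXVA, hXVA]
  have hV : pushPMF r Prod.fst = fun _ => (Fintype.card Bool : ℝ)⁻¹ := by
    ext v
    rw [hr, pushPMF_pushPMF, pushPMF_xor_apply hmarg]
    norm_num
  refine ⟨q, β, fun a => add_nonneg (hr0 _) (hr0 _), ?_, hβ, ?_, ?_⟩
  · rw [← hp.2, ← sum_pushPMF p (fun w => (xor w.1.1 w.1.2, w.2)), Fintype.sum_prod_type_right]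
    simp only [Fintype.sum_bool]
    rfl
  · apply condEnt_eq_sum_mul_binEntropy_div <;> intro a <;>
      simp [hXA, (hrβ a).1, (hrβ a).2, bern, binConv] <;> ring
  · have hchain : mutInfo r = ent (pushPMF r Prod.fst) - condEnt r := by
      rw [mutInfo, condEnt]; ring
    rw [hchain, hV, ent_uniform, condEnt_eq_sum_mul_binEntropy_div r q β (fun a => (hrβ a).1)
      (fun a => (hrβ a).2)]
    norm_num

end XorChannel

section Calculus

variable {f f' : ℝ → ℝ} {a b : ℝ}

lemma monotoneOn_Ioo_of_hasDerivAt_nonneg (hf : ∀ x ∈ Ioo a b, HasDerivAt f (f' x) x)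
    (hf' : ∀ x ∈ Ioo a b, 0 ≤ f' x) : MonotoneOn f (Ioo a b) :=
  monotoneOn_of_hasDerivWithinAt_nonneg (convex_Ioo a b)
    (fun x hx => (hf x hx).continuousAt.continuousWithinAt)
    (fun x hx => (hf x (interior_subset hx)).hasDerivWithinAt)
    (fun x hx => hf' x (interior_subset hx))

lemma isMinOn_Icc_of_hasDerivAt {m : ℝ} (hm : m ∈ Icc a b) (hf : ContinuousOn f (Icc a b))
    (hf' : ∀ x ∈ Ioo a b, HasDerivAt f (f' x) x) (hleft : ∀ x ∈ Ioo a m, f' x ≤ 0)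
    (hright : ∀ x ∈ Ioo m b, 0 ≤ f' x) : IsMinOn f (Icc a b) m := by
  intro x hx
  rcases le_total x m with hxm | hmx
  · refine antitoneOn_of_hasDerivWithinAt_nonpos (f' := f') (convex_Icc a m)
      (hf.mono (Icc_subset_Icc_right hm.2)) (fun y hy => ?_) (fun y hy => ?_)
      ⟨hx.1, hxm⟩ ⟨hm.1, le_rfl⟩ hxm
    all_goals rw [interior_Icc] at hy
    · exact (hf' y ⟨hy.1, hy.2.trans_le hm.2⟩).hasDerivWithinAt
    · exact hleft y hy
  · refine monotoneOn_of_hasDerivWithinAt_nonneg (f' := f') (convex_Icc m b)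
      (hf.mono (Icc_subset_Icc_left hm.1)) (fun y hy => ?_) (fun y hy => ?_)
      ⟨le_rfl, hm.2⟩ ⟨hmx, hx.2⟩ hmx
    all_goals rw [interior_Icc] at hy
    · exact (hf' y ⟨hm.1.trans_lt hy.1, hy.2⟩).hasDerivWithinAt
    · exact hright y hy

end Calculus

section BinaryEntropy

noncomputable def binEntropyDeriv (t : ℝ) : ℝ := log (1 - t) - log t

lemma hasDerivAt_binEntropyDeriv {t : ℝ} (ht0 : t ≠ 0) (ht1 : t ≠ 1) :
    HasDerivAt binEntropyDeriv (-1 / (t * (1 - t))) t := by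
  have h1t : 1 - t ≠ 0 := sub_ne_zero.2 (Ne.symm ht1)
  have := (((hasDerivAt_id t).const_sub 1).log h1t).sub (hasDerivAt_log ht0)
  refine this.congr_deriv ?_
  simp only [id]
  field_simp
  ring

lemma binEntropyDeriv_pos {t : ℝ} (ht : t ∈ Ioo 0 (1 / 2)) : 0 < binEntropyDeriv t :=
  sub_pos.2 (log_lt_log ht.1 (by linarith [ht.2]))

lemma two_mul_one_sub_two_mul_le_binEntropyDeriv {t : ℝ} (ht0 : 0 < t) (ht : t ≤ 1 / 2) :
    2 * (1 - 2 * t) ≤ binEntropyDeriv t := by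
  have hx : |1 - 2 * t| < 1 := abs_lt.2 ⟨by linarith, by linarith⟩
  have hx0 : 0 ≤ 1 - 2 * t := by linarith
  have e : log (1 + (1 - 2 * t)) - log (1 - (1 - 2 * t)) = binEntropyDeriv t := by
    rw [binEntropyDeriv, show 1 + (1 - 2 * t) = 2 * (1 - t) by ring,
      show 1 - (1 - 2 * t) = 2 * t by ring, log_mul two_ne_zero (by linarith),
      log_mul two_ne_zero ht0.ne']
    ring
  rw [← e]
  -- all terms of the series of `log (1 + x) - log (1 - x)` are nonnegative; the first is `2x`
  simpa using le_hasSum (hasSum_log_sub_log_of_abs_lt_one hx) 0 fun k _ => by positivity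

lemma monotoneOn_mul_one_sub_mul_binEntropyDeriv_div :
    MonotoneOn (fun t => t * (1 - t) * binEntropyDeriv t / (1 - 2 * t)) (Ioo 0 (1 / 2)) := by
  refine monotoneOn_Ioo_of_hasDerivAt_nonneg
    (f' := fun t => ((1 - 2 * t + 2 * t ^ 2) * binEntropyDeriv t - (1 - 2 * t)) / (1 - 2 * t) ^ 2)
    (fun t ⟨ht0, ht⟩ => ?_) (fun t ⟨ht0, ht⟩ => ?_)
  · have hderiv := (((hasDerivAt_id t).mul ((hasDerivAt_id t).const_sub 1)).mul
      (hasDerivAt_binEntropyDeriv ht0.ne' (by linarith))).div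
      (((hasDerivAt_id t).const_mul 2).const_sub 1) (by simp; linarith)
    have h1t : 1 - t ≠ 0 := by linarith
    have h12t : 1 - 2 * t ≠ 0 := by linarith
    refine hderiv.congr_deriv ?_
    simp only [id, Pi.mul_apply]
    field_simp
    ring
  · have hD := two_mul_one_sub_two_mul_le_binEntropyDeriv ht0 ht.le
    have hquad : 0 < 1 - 2 * t + 2 * t ^ 2 := by nlinarith
    refine div_nonneg ?_ (sq_nonneg _)
    nlinarith [mul_le_mul_of_nonneg_left hD hquad.le, pow_nonneg (by linarith : 0 ≤ 1 - 2 * t) 3]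

end BinaryEntropy

section BinConv

variable {ρ t : ℝ}

lemma hasDerivAt_binConv (ρ t : ℝ) : HasDerivAt (fun t => binConv t ρ) (1 - 2 * ρ) t := by
  refine (((hasDerivAt_id t).mul_const (1 - ρ)).add
    (((hasDerivAt_id t).const_sub 1).mul_const ρ)).congr_deriv ?_
  ring

lemma binConv_one_sub (t ρ : ℝ) : binConv (1 - t) ρ = 1 - binConv t ρ := by
  unfold binConv; ring

lemma one_sub_two_mul_binConv (t ρ : ℝ) : 1 - 2 * binConv t ρ = (1 - 2 * t) * (1 - 2 * ρ) := by
  unfold binConv; ring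

lemma le_binConv (hρ0 : 0 ≤ ρ) (ht : t ≤ 1 / 2) : t ≤ binConv t ρ := by
  unfold binConv; nlinarith

lemma binConv_mem_Ioo (hρ0 : 0 ≤ ρ) (hρ : ρ < 1 / 2) (ht : t ∈ Ioo 0 (1 / 2)) :
    binConv t ρ ∈ Ioo 0 (1 / 2) := by
  obtain ⟨ht0, ht⟩ := ht
  have := one_sub_two_mul_binConv t ρ
  constructor
  · unfold binConv; nlinarith
  · nlinarith

lemma monotoneOn_binEntropyDeriv_binConv_div (hρ0 : 0 ≤ ρ) (hρ : ρ < 1 / 2) :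
    MonotoneOn (fun t => binEntropyDeriv (binConv t ρ) / binEntropyDeriv t) (Ioo 0 (1 / 2)) := by
  refine monotoneOn_Ioo_of_hasDerivAt_nonneg
    (f' := fun t => ((1 - 2 * ρ) * (-1 / (binConv t ρ * (1 - binConv t ρ))) * binEntropyDeriv t
      - binEntropyDeriv (binConv t ρ) * (-1 / (t * (1 - t)))) / binEntropyDeriv t ^ 2)
    (fun t ht => ?_) (fun t ht => ?_)
  · obtain ⟨hu0, hu⟩ := binConv_mem_Ioo hρ0 hρ ht
    refine (((hasDerivAt_binEntropyDeriv hu0.ne' (by linarith)).comp t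
      (hasDerivAt_binConv ρ t)).div (hasDerivAt_binEntropyDeriv ht.1.ne' (by linarith [ht.2]))
      (binEntropyDeriv_pos ht).ne').congr_deriv ?_
    simp only [Function.comp_apply]
    ring
  · obtain ⟨ht0, ht⟩ := ht
    obtain ⟨hu0, hu⟩ := binConv_mem_Ioo hρ0 hρ ⟨ht0, ht⟩
    have hN := monotoneOn_mul_one_sub_mul_binEntropyDeriv_div ⟨ht0, ht⟩ ⟨hu0, hu⟩
      (le_binConv hρ0 ht.le)
    -- `1 - 2u = (1 - 2t)(1 - 2ρ)` turns the comparison at `t ≤ u` into the numerator's sign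
    rw [div_le_div_iff₀ (by linarith) (by linarith), one_sub_two_mul_binConv] at hN
    set u := binConv t ρ
    have key : (1 - 2 * ρ) * (t * (1 - t) * binEntropyDeriv t)
        ≤ u * (1 - u) * binEntropyDeriv u := by
      nlinarith
    have h1t : 1 - t ≠ 0 := by linarith
    have h1u : 1 - u ≠ 0 := by linarith
    have e : (1 - 2 * ρ) * (-1 / (u * (1 - u))) * binEntropyDeriv t
          - binEntropyDeriv u * (-1 / (t * (1 - t)))
        = (u * (1 - u) * binEntropyDeriv u - (1 - 2 * ρ) * (t * (1 - t) * binEntropyDeriv t))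
          / (t * (1 - t) * (u * (1 - u))) := by
      field_simp
      ring
    rw [e]
    exact div_nonneg (div_nonneg (sub_nonneg.2 key)
      (mul_pos (mul_pos ht0 (by linarith)) (mul_pos hu0 (by linarith))).le) (sq_nonneg _)

end BinConv

section MrsGerber

variable {ρ : ℝ}

lemma binEntropy_binConv_tangent_le (hρ0 : 0 ≤ ρ) (hρ : ρ < 1 / 2) {α t : ℝ}
    (hα : α ∈ Ioo 0 (1 / 2)) (ht : t ∈ Icc 0 1) :
    binEntropy (binConv α ρ) + (1 - 2 * ρ) * binEntropyDeriv (binConv α ρ) / binEntropyDeriv α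
      * (binEntropy t - binEntropy α) ≤ binEntropy (binConv t ρ) := by
  set S := fun x => (1 - 2 * ρ) * binEntropyDeriv (binConv x ρ) / binEntropyDeriv x
  set Φ := fun x => binEntropy (binConv x ρ) - S α * binEntropy x
  have hS : MonotoneOn S (Ioo 0 (1 / 2)) := fun x hx y hy hxy => by
    simp only [S, mul_div_assoc]
    exact mul_le_mul_of_nonneg_left (monotoneOn_binEntropyDeriv_binConv_div hρ0 hρ hx hy hxy)
      (by linarith)
  have hΦ' : ∀ x ∈ Ioo (0 : ℝ) (1 / 2),
      HasDerivAt Φ (binEntropyDeriv x * (S x - S α)) x := by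
    intro x hx
    obtain ⟨hu0, hu⟩ := binConv_mem_Ioo hρ0 hρ hx
    have hD := (binEntropyDeriv_pos hx).ne'
    refine (((hasDerivAt_binEntropy hu0.ne' (by linarith)).comp x
      (hasDerivAt_binConv ρ x)).sub ((hasDerivAt_binEntropy hx.1.ne'
      (by linarith [hx.2])).const_mul (S α))).congr_deriv ?_
    simp only [S, binEntropyDeriv] at hD ⊢
    field_simp
  have hmin : IsMinOn Φ (Icc 0 (1 / 2)) α := by
    refine isMinOn_Icc_of_hasDerivAt ⟨hα.1.le, hα.2.le⟩
      (Continuous.continuousOn (by simp only [Φ, binConv]; fun_prop)) hΦ'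
      (fun x hx => ?_) (fun x hx => ?_)
    · have hx' : x ∈ Ioo 0 (1 / 2) := ⟨hx.1, hx.2.trans hα.2⟩
      exact mul_nonpos_of_nonneg_of_nonpos (binEntropyDeriv_pos hx').le
        (sub_nonpos.2 (hS hx' hα hx.2.le))
    · have hx' : x ∈ Ioo 0 (1 / 2) := ⟨hα.1.trans hx.1, hx.2⟩
      exact mul_nonneg (binEntropyDeriv_pos hx').le (sub_nonneg.2 (hS hα hx' hx.1.le))
  -- `Φ` is symmetric about `1/2`, so its minimum over `[0, 1/2]` is its minimum over `[0, 1]`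
  have hΦt : Φ α ≤ Φ t := by
    rcases le_total t (1 / 2) with h | h
    · exact hmin ⟨ht.1, h⟩
    · have h' : Φ α ≤ Φ (1 - t) := hmin ⟨by linarith [ht.2], by linarith⟩
      simpa only [Φ, binConv_one_sub, binEntropy_one_sub] using h'
  simp only [Φ] at hΦt
  linarith

lemma binEntropy_le_binEntropy_binConv {b : ℝ} (hρ : ρ ∈ Icc 0 1) (hb : b ∈ Icc 0 1) :
    binEntropy ρ ≤ binEntropy (binConv b ρ) := by
  have := strictConcave_binEntropy.concaveOn.2 hρ (show 1 - ρ ∈ Icc 0 1 from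
    ⟨by linarith [hρ.2], by linarith [hρ.1]⟩) (by linarith [hb.2] : 0 ≤ 1 - b) hb.1 (by ring)
  rw [show binConv b ρ = (1 - b) * ρ + b * (1 - ρ) by unfold binConv; ring]
  simpa only [smul_eq_mul, binEntropy_one_sub, ← add_mul, sub_add_cancel, one_mul] using this

lemma binEntropy_lt_binEntropy_binConv {b : ℝ} (hρ : ρ ∈ Icc 0 1) (hρ2 : ρ ≠ 1 / 2)
    (hb : b ∈ Ioo 0 1) : binEntropy ρ < binEntropy (binConv b ρ) := by
  have := strictConcave_binEntropy.2 hρ (show 1 - ρ ∈ Icc 0 1 from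
    ⟨by linarith [hρ.2], by linarith [hρ.1]⟩) (fun h => hρ2 (by linarith))
    (by linarith [hb.2] : 0 < 1 - b) hb.1 (by ring)
  rw [show binConv b ρ = (1 - b) * ρ + b * (1 - ρ) by unfold binConv; ring]
  simpa only [smul_eq_mul, binEntropy_one_sub, ← add_mul, sub_add_cancel, one_mul] using this

end MrsGerber

section WeightedSum

variable {ι : Type*} [Fintype ι] {q f : ι → ℝ} {c : ℝ}

lemma sum_mul_le_of_le (hq0 : ∀ i, 0 ≤ q i) (hq1 : ∑ i, q i = 1) (hf : ∀ i, f i ≤ c) :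
    ∑ i, q i * f i ≤ c :=
  calc ∑ i, q i * f i ≤ ∑ i, q i * c :=
        Finset.sum_le_sum fun i _ => mul_le_mul_of_nonneg_left (hf i) (hq0 i)
    _ = c := by rw [← Finset.sum_mul, hq1, one_mul]

lemma le_sum_mul_of_le (hq0 : ∀ i, 0 ≤ q i) (hq1 : ∑ i, q i = 1) (hf : ∀ i, c ≤ f i) :
    c ≤ ∑ i, q i * f i :=
  calc c = ∑ i, q i * c := by rw [← Finset.sum_mul, hq1, one_mul]
    _ ≤ ∑ i, q i * f i := Finset.sum_le_sum fun i _ => mul_le_mul_of_nonneg_left (hf i) (hq0 i)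

end WeightedSum

section MrsGerberSum

variable {ι : Type*} [Fintype ι] {ρ : ℝ} {q β : ι → ℝ}

lemma sum_mul_binEntropy_eq_zero_of_sum_binConv_eq (hρ0 : 0 ≤ ρ) (hρ : ρ < 1 / 2)
    (hq0 : ∀ i, 0 ≤ q i) (hq1 : ∑ i, q i = 1) (hβ : ∀ i, β i ∈ Icc 0 1)
    (heq : ∑ i, q i * binEntropy (binConv (β i) ρ) = binEntropy ρ) :
    ∑ i, q i * binEntropy (β i) = 0 := by
  have hρ' : ρ ∈ Icc 0 1 := ⟨hρ0, by linarith⟩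
  have hterm : ∀ i ∈ Finset.univ, 0 ≤ q i * (binEntropy (binConv (β i) ρ) - binEntropy ρ) :=
    fun i _ => mul_nonneg (hq0 i) (sub_nonneg.2 (binEntropy_le_binEntropy_binConv hρ' (hβ i)))
  have hzero := (Finset.sum_eq_zero_iff_of_nonneg hterm).1 (by
    simp only [mul_sub, Finset.sum_sub_distrib, ← Finset.sum_mul, hq1, heq, one_mul, sub_self])
  refine Finset.sum_eq_zero fun i hi => ?_
  rcases (hq0 i).eq_or_lt with hqi | hqi
  · rw [← hqi, zero_mul]
  have hi' := sub_eq_zero.1 ((mul_eq_zero.1 (hzero i hi)).resolve_left hqi.ne')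
  have hβi : β i = 0 ∨ β i = 1 := by
    by_contra hne
    rw [not_or] at hne
    exact (binEntropy_lt_binEntropy_binConv hρ' hρ.ne ⟨(hβ i).1.lt_of_ne (Ne.symm hne.1),
      (hβ i).2.lt_of_ne hne.2⟩).ne' hi'
  rw [binEntropy_eq_zero.2 hβi, mul_zero]

lemma sum_mul_binEntropy_le_of_sum_binConv_eq (hρ0 : 0 ≤ ρ) (hρ : ρ < 1 / 2) {α : ℝ}
    (hα : α ∈ Icc 0 (1 / 2)) (hq0 : ∀ i, 0 ≤ q i) (hq1 : ∑ i, q i = 1) (hβ : ∀ i, β i ∈ Icc 0 1)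
    (heq : ∑ i, q i * binEntropy (binConv (β i) ρ) = binEntropy (binConv α ρ)) :
    ∑ i, q i * binEntropy (β i) ≤ binEntropy α := by
  rcases hα.2.eq_or_lt with rfl | hα2
  · rw [one_div, binEntropy_two_inv]
    exact sum_mul_le_of_le hq0 hq1 fun i => binEntropy_le_log_two
  rcases hα.1.eq_or_lt with rfl | hα0
  · rw [show binConv 0 ρ = ρ by unfold binConv; ring] at heq
    rw [sum_mul_binEntropy_eq_zero_of_sum_binConv_eq hρ0 hρ hq0 hq1 hβ heq, binEntropy_zero]
  set c := (1 - 2 * ρ) * binEntropyDeriv (binConv α ρ) / binEntropyDeriv α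
  have hc : 0 < c := div_pos (mul_pos (by linarith)
    (binEntropyDeriv_pos (binConv_mem_Ioo hρ0 hρ ⟨hα0, hα2⟩)))
    (binEntropyDeriv_pos ⟨hα0, hα2⟩)
  have htangent : binEntropy (binConv α ρ) + c * (∑ i, q i * binEntropy (β i) - binEntropy α)
      ≤ binEntropy (binConv α ρ) :=
    calc binEntropy (binConv α ρ) + c * (∑ i, q i * binEntropy (β i) - binEntropy α)
        = ∑ i, q i * (binEntropy (binConv α ρ) + c * (binEntropy (β i) - binEntropy α)) := by
          have hterm : ∀ i, q i * (binEntropy (binConv α ρ) + c * (binEntropy (β i) - binEntropy α))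
              = (binEntropy (binConv α ρ) - c * binEntropy α) * q i
                + c * (q i * binEntropy (β i)) := fun i => by ring
          rw [Finset.sum_congr rfl fun i _ => hterm i, Finset.sum_add_distrib, ← Finset.mul_sum,
            ← Finset.mul_sum, hq1]
          ring
      _ ≤ ∑ i, q i * binEntropy (binConv (β i) ρ) := Finset.sum_le_sum fun i _ =>
          mul_le_mul_of_nonneg_left (binEntropy_binConv_tangent_le hρ0 hρ ⟨hα0, hα2⟩ (hβ i))
            (hq0 i)
      _ = binEntropy (binConv α ρ) := heq
  nlinarith

lemma exists_binEntropy_binConv_eq_sum_and_sum_le (hρ0 : 0 ≤ ρ) (hρ : ρ ≤ 1 / 2)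
    (hq0 : ∀ i, 0 ≤ q i) (hq1 : ∑ i, q i = 1) (hβ : ∀ i, β i ∈ Icc 0 1) :
    ∃ α ∈ Icc (0 : ℝ) (1 / 2),
      binEntropy (binConv α ρ) = ∑ i, q i * binEntropy (binConv (β i) ρ) ∧
      ∑ i, q i * binEntropy (β i) ≤ binEntropy α := by
  rcases hρ.eq_or_lt with rfl | hρ
  · have hhalf : ∀ t, binConv t (1 / 2) = 2⁻¹ := fun t => by unfold binConv; ring
    refine ⟨1 / 2, ⟨by norm_num, le_rfl⟩, ?_, ?_⟩
    · simp only [hhalf, binEntropy_two_inv, ← Finset.sum_mul, hq1, one_mul]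
    · rw [one_div, binEntropy_two_inv]
      exact sum_mul_le_of_le hq0 hq1 fun i => binEntropy_le_log_two
  have hhalf : binConv (1 / 2) ρ = 2⁻¹ := by unfold binConv; ring
  obtain ⟨α, hα, hαS⟩ := intermediate_value_Icc (by norm_num : (0 : ℝ) ≤ 1 / 2)
    (f := fun t => binEntropy (binConv t ρ)) (by unfold binConv; fun_prop)
    (show ∑ i, q i * binEntropy (binConv (β i) ρ) ∈ Icc _ _ from
      ⟨le_sum_mul_of_le hq0 hq1 fun i => by
        simpa [binConv] using binEntropy_le_binEntropy_binConv ⟨hρ0, by linarith⟩ (hβ i),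
      sum_mul_le_of_le hq0 hq1 fun i => by
        show _ ≤ binEntropy (binConv (1 / 2) ρ)
        rw [hhalf, binEntropy_two_inv]
        exact binEntropy_le_log_two⟩)
  exact ⟨α, hα, hαS, sum_mul_binEntropy_le_of_sum_binConv_eq hρ0 hρ hα hq0 hq1 hβ hαS.symm⟩

end MrsGerberSum

/-- binary helper example, converse direction: let `ρ ∈ [0,1/2]`,
`X ∼ Bern(1/2)` and `Z ∼ Bern(ρ)` independent, `V := X ⊕ Z`, and let `A` be any
finite-valued random variable with the Markov chain `X ↔ V ↔ A`. Here the joint pmf `p`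
is on `(Bool × Bool) × 𝒜`, the first two coordinates being `(X, Z)`. Then there is an
`α ∈ [0,1/2]` with `H(X|A) = h(α ⋆ ρ)` and `I(V;A) ≥ 1 − h(α)`. -/
theorem binary_helper_converse
    {𝒜 : Type} [Fintype 𝒜]
    (ρ : ℝ) (hρ0 : 0 ≤ ρ) (hρ2 : ρ ≤ 1 / 2)
    (p : (Bool × Bool) × 𝒜 → ℝ) (hp : IsPMF p)
    (hmarg : ∀ x z : Bool, pushPMF p Prod.fst (x, z) = (1 / 2) * bern ρ z)
    (hmc : MarkovChain p (fun w => w.1.1) (fun w => xor w.1.1 w.1.2) (fun w => w.2)) :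
    ∃ α : ℝ, 0 ≤ α ∧ α ≤ 1 / 2 ∧
      condEnt (pushPMF p (fun w => (w.1.1, w.2))) = binEnt (binConv α ρ) ∧
      1 - binEnt α ≤ mutInfo (pushPMF p (fun w => (xor w.1.1 w.1.2, w.2))) := by
  obtain ⟨q, β, hq0, hq1, hβ, hcond, hmut⟩ :=
    exists_condEnt_mutInfo_eq_sum_binEntropy hp hmarg hmc
  obtain ⟨α, ⟨hα0, hα2⟩, hαeq, hαle⟩ :=
    exists_binEntropy_binConv_eq_sum_and_sum_le hρ0 hρ2 hq0 hq1 hβ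
  refine ⟨α, hα0, hα2, ?_, ?_⟩
  · rw [hcond, ← hαeq, binEnt_eq_binEntropy_div]
  · rw [hmut, binEnt_eq_binEntropy_div]
    gcongr
end

section
/- Markov chain in the Mode 2 converse (step e): Let {(X_i, Y_i, V_i)}_{i=1}^n be i.i.d. copies of a finite-valued tuple (X,Y,V), and let M := f(V_1,…,V_n) for an arbitrary function f. Then for each i = 1,…,n, the Markov chain X_i ↔ (M, V_1^{i−1}, Y_1^n) ↔ X_1^{i−1} holds; that is, X_i is conditionally independent of (X_1,…,X_{i−1}) given (M, V_1,…,V_{i−1}, Y_1,…,Y_n). In particular this follows from the Markov chain (X_i, M, Y_i^n) ↔ V_1^{i−1} ↔ (X_1^{i−1}, Y_1^{i−1}), which also holds. -/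
/-!
Split a sample into its past block (indices `j < i`) and its future block (`j ≥ i`); under the
i.i.d. pmf the two blocks are independent. In both chains the right-hand variable is a function
of the past, while the left-hand and the conditioning variables see the past only through a
statistic `K` of it (`V_1^{i-1}`, together with `Y_1^{i-1}` in the first chain) that the
conditioning variable determines. On a fibre `{C = c}` every event involved is then a past event
times a future event, and `P(b,c,d) P(c) = P(b,c) P(c,d)` follows by multiplying out.
-/

open scoped Classical BigOperators

section IID

variable {𝒳 𝒴 𝒱 ℳ : Type} [Fintype 𝒳] [Fintype 𝒴] [Fintype 𝒱] [Fintype ℳ]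

/-- The i.i.d. pmf of `n` copies of the single-letter source `p` on `𝒳 × 𝒴 × 𝒱`. -/
noncomputable def iidPMF (p : 𝒳 × 𝒴 × 𝒱 → ℝ) (n : ℕ) : (Fin n → 𝒳 × 𝒴 × 𝒱) → ℝ :=
  fun s => ∏ i, p (s i)

section MarkovChainCriteria

variable {Ω Ω' Ω₁ Ω₂ ι α κ β γ δ : Type*}

theorem ite_some_none_congr {S : ι → Prop} [DecidablePred S] {x y : ι → β}
    (h : ∀ j, S j → x j = y j) :
    (fun j => if S j then some (x j) else none) = fun j => if S j then some (y j) else none :=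
  funext fun j => by by_cases hj : S j <;> simp [hj, h]

theorem eq_of_ite_some_none_eq {S : ι → Prop} [DecidablePred S] {x y : ι → β}
    (h : (fun j => if S j then some (x j) else none) = fun j => if S j then some (y j) else none)
    (hc : ∀ j, ¬ S j → x j = y j) (j : ι) : x j = y j := by
  by_cases hj : S j
  · simpa [hj] using congrFun h j
  · exact hc j hj

theorem pushPMF_eq_zero [Fintype Ω] {p : Ω → ℝ} {F : Ω → β} {x : β} (h : ∀ ω, F ω ≠ x) :
    pushPMF p F x = 0 :=
  Finset.sum_eq_zero fun ω _ => if_neg (h ω)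

theorem pushPMF_comp_equiv [Fintype Ω] [Fintype Ω'] (e : Ω' ≃ Ω) (p : Ω → ℝ) (F : Ω → β) :
    pushPMF (p ∘ e) (F ∘ e) = pushPMF p F :=
  funext fun x => e.sum_comp fun ω => if F ω = x then p ω else 0

theorem MarkovChain.comp_equiv_iff [Fintype Ω] [Fintype Ω'] (e : Ω' ≃ Ω) {p : Ω → ℝ}
    {B : Ω → β} {C : Ω → γ} {D : Ω → δ} :
    MarkovChain (p ∘ e) (B ∘ e) (C ∘ e) (D ∘ e) ↔ MarkovChain p B C D := by
  unfold MarkovChain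
  rw [← pushPMF_comp_equiv e p (fun ω => (B ω, C ω, D ω)), ← pushPMF_comp_equiv e p C,
    ← pushPMF_comp_equiv e p (fun ω => (B ω, C ω)), ← pushPMF_comp_equiv e p (fun ω => (C ω, D ω))]
  rfl

theorem pushPMF_eq_sum_ite [Fintype Ω] {p : Ω → ℝ} {F : Ω → β} {x : β} (E : Ω → Prop)
    [DecidablePred E] (h : ∀ ω, F ω = x ↔ E ω) :
    pushPMF p F x = ∑ ω, if E ω then p ω else 0 := by
  refine Finset.sum_congr rfl fun ω _ => ?_
  by_cases hω : E ω
  · rw [if_pos ((h ω).2 hω), if_pos hω]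
  · rw [if_neg (mt (h ω).1 hω), if_neg hω]

theorem sum_ite_and_mul [Fintype Ω₁] [Fintype Ω₂] (p₁ : Ω₁ → ℝ) (p₂ : Ω₂ → ℝ)
    (E₁ : Ω₁ → Prop) (E₂ : Ω₂ → Prop) [DecidablePred E₁] [DecidablePred E₂] :
    ∑ ω : Ω₁ × Ω₂, (if E₁ ω.1 ∧ E₂ ω.2 then p₁ ω.1 * p₂ ω.2 else 0)
      = (∑ ω₁, if E₁ ω₁ then p₁ ω₁ else 0) * ∑ ω₂, if E₂ ω₂ then p₂ ω₂ else 0 := by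
  simp only [Fintype.sum_prod_type, Finset.sum_mul_sum, ite_zero_mul_ite_zero]

theorem MarkovChain.of_prod [Fintype Ω₁] [Fintype Ω₂] (p₁ : Ω₁ → ℝ) (p₂ : Ω₂ → ℝ)
    (K : Ω₁ × Ω₂ → κ) (B : Ω₁ × Ω₂ → β) (C : Ω₁ × Ω₂ → γ) (D : Ω₁ × Ω₂ → δ)
    (hK : ∀ ω ω', ω.1 = ω'.1 → K ω = K ω')
    (hB : ∀ ω ω', ω.2 = ω'.2 → K ω = K ω' → B ω = B ω')
    (hC : ∀ ω ω', ω.2 = ω'.2 → K ω = K ω' → C ω = C ω')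
    (hCK : ∀ ω ω', C ω = C ω' → K ω = K ω')
    (hD : ∀ ω ω', ω.1 = ω'.1 → D ω = D ω') :
    MarkovChain (fun ω => p₁ ω.1 * p₂ ω.2) B C D := by
  intro b c d
  by_cases hc : ∃ ω₀, C ω₀ = c
  swap
  · rw [pushPMF_eq_zero (F := C) fun ω h => hc ⟨ω, h⟩,
      pushPMF_eq_zero (F := fun ω => (B ω, C ω)) fun ω h => hc ⟨ω, congrArg Prod.snd h⟩]
    ring
  obtain ⟨ω₀, rfl⟩ := hc
  have hfac : ∀ (R : β → Prop) (T : δ → Prop) [DecidablePred R] [DecidablePred T],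
      (∑ ω : Ω₁ × Ω₂, if C ω = C ω₀ ∧ R (B ω) ∧ T (D ω) then p₁ ω.1 * p₂ ω.2 else 0)
        = (∑ ω₁, if K (ω₁, ω₀.2) = K ω₀ ∧ T (D (ω₁, ω₀.2)) then p₁ ω₁ else 0)
          * ∑ ω₂, if C (ω₀.1, ω₂) = C ω₀ ∧ R (B (ω₀.1, ω₂)) then p₂ ω₂ else 0 := by
    intro R T _ _
    rw [← sum_ite_and_mul]
    refine Finset.sum_congr rfl fun ω _ => if_congr ?_ rfl rfl
    rw [hK (ω.1, ω₀.2) ω rfl, hD (ω.1, ω₀.2) ω rfl]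
    by_cases hk : K ω = K ω₀
    · have hk' : K ω = K (ω₀.1, ω.2) := hk.trans (hK _ _ rfl)
      rw [hB ω (ω₀.1, ω.2) rfl hk', hC ω (ω₀.1, ω.2) rfl hk']
      tauto
    · have : C ω ≠ C ω₀ := fun h => hk (hCK _ _ h)
      tauto
  rw [pushPMF_eq_sum_ite (fun ω => C ω = C ω₀ ∧ B ω = b ∧ D ω = d) fun ω => by
      simp only [Prod.mk.injEq]; tauto,
    pushPMF_eq_sum_ite (fun ω => C ω = C ω₀ ∧ True ∧ True) fun ω => by simp only [and_true],
    pushPMF_eq_sum_ite (fun ω => C ω = C ω₀ ∧ B ω = b ∧ True) fun ω => by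
      simp only [Prod.mk.injEq]; tauto,
    pushPMF_eq_sum_ite (fun ω => C ω = C ω₀ ∧ True ∧ D ω = d) fun ω => by
      simp only [Prod.mk.injEq]; tauto,
    hfac (· = b) (· = d), hfac (fun _ => True) (fun _ => True), hfac (· = b) (fun _ => True),
    hfac (fun _ => True) (· = d)]
  ring

theorem prod_piEquivPiSubtypeProd_symm [CommMonoid β] [Fintype ι] (S : ι → Prop)
    [DecidablePred S] (g : α → β) (ω : ({j // S j} → α) × ({j // ¬ S j} → α)) :
    ∏ j, g ((Equiv.piEquivPiSubtypeProd S fun _ => α).symm ω j)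
      = (∏ j, g (ω.1 j)) * ∏ j, g (ω.2 j) := by
  rw [← Fintype.prod_subtype_mul_prod_subtype S]
  congr 1 <;> exact Finset.prod_congr rfl fun j _ => by simp [j.2]

theorem MarkovChain.of_pi [Fintype ι] [DecidableEq ι] [Fintype α] (p : α → ℝ) (S : ι → Prop)
    (K : (ι → α) → κ) (B : (ι → α) → β) (C : (ι → α) → γ) (D : (ι → α) → δ)
    (hK : ∀ s s', (∀ j, S j → s j = s' j) → K s = K s')
    (hB : ∀ s s', (∀ j, ¬ S j → s j = s' j) → K s = K s' → B s = B s')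
    (hC : ∀ s s', (∀ j, ¬ S j → s j = s' j) → K s = K s' → C s = C s')
    (hCK : ∀ s s', C s = C s' → K s = K s')
    (hD : ∀ s s', (∀ j, S j → s j = s' j) → D s = D s') :
    MarkovChain (fun s => ∏ j, p (s j)) B C D := by
  let e := (Equiv.piEquivPiSubtypeProd S fun _ => α).symm
  have past : ∀ ω ω', ω.1 = ω'.1 → ∀ j, S j → e ω j = e ω' j := by
    intro ω ω' h j hj
    simp [e, hj, h]
  have future : ∀ ω ω', ω.2 = ω'.2 → ∀ j, ¬ S j → e ω j = e ω' j := by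
    intro ω ω' h j hj
    simp [e, hj, h]
  rw [← MarkovChain.comp_equiv_iff e]
  have hp : (fun s => ∏ j, p (s j)) ∘ e = fun ω => (∏ j, p (ω.1 j)) * ∏ j, p (ω.2 j) :=
    funext (prod_piEquivPiSubtypeProd_symm S p)
  rw [hp]
  exact MarkovChain.of_prod (fun ω₁ => ∏ j, p (ω₁ j)) (fun ω₂ => ∏ j, p (ω₂ j)) (K ∘ e) (B ∘ e)
    (C ∘ e) (D ∘ e)
    (fun ω ω' h => hK (e ω) (e ω') (past ω ω' h)) (fun ω ω' h => hB (e ω) (e ω') (future ω ω' h))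
    (fun ω ω' h => hC (e ω) (e ω') (future ω ω' h)) (fun ω ω' => hCK (e ω) (e ω'))
    (fun ω ω' h => hD (e ω) (e ω') (past ω ω' h))

end MarkovChainCriteria

theorem mode2_converse_markov_step_e_general
    (p : 𝒳 × 𝒴 × 𝒱 → ℝ) (n : ℕ)
    (f : (Fin n → 𝒱) → ℳ) :
    ∀ i : Fin n,
      MarkovChain (iidPMF p n)
        (fun s => (s i).1)
        (fun s => (f (fun j => (s j).2.2),
          fun j : Fin n => if (j : ℕ) < (i : ℕ) then some ((s j).2.2) else none,
          fun j : Fin n => (s j).2.1))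
        (fun s => fun j : Fin n => if (j : ℕ) < (i : ℕ) then some ((s j).1) else none) ∧
      MarkovChain (iidPMF p n)
        (fun s => ((s i).1, f (fun j => (s j).2.2),
          fun j : Fin n => if (i : ℕ) ≤ (j : ℕ) then some ((s j).2.1) else none))
        (fun s => fun j : Fin n => if (j : ℕ) < (i : ℕ) then some ((s j).2.2) else none)
        (fun s => (fun j : Fin n => if (j : ℕ) < (i : ℕ) then some ((s j).1) else none,
          fun j : Fin n => if (j : ℕ) < (i : ℕ) then some ((s j).2.1) else none)) := by
  intro i
  have hi : ¬ (i : ℕ) < i := lt_irrefl _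
  constructor
  · refine MarkovChain.of_pi p (fun j : Fin n => (j : ℕ) < i)
      (fun s (j : Fin n) => if (j : ℕ) < i then some (s j).2 else none) _ _ _
      (fun s s' h => ite_some_none_congr fun j hj => by rw [h j hj])
      (fun s s' h _ => by simp only [h i hi])
      (fun s s' h hk => ?_) (fun s s' h => ?_)
      (fun s s' h => ite_some_none_congr fun j hj => by rw [h j hj])
    · have hYV := eq_of_ite_some_none_eq hk fun j hj => by rw [h j hj]
      simp only [hYV]
    · simp only [Prod.mk.injEq] at h
      refine ite_some_none_congr fun j hj => Prod.ext (congrFun h.2.2 j) ?_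
      simpa [hj] using congrFun h.2.1 j
  · refine MarkovChain.of_pi p (fun j : Fin n => (j : ℕ) < i)
      (fun s (j : Fin n) => if (j : ℕ) < i then some (s j).2.2 else none) _ _ _
      (fun s s' h => ite_some_none_congr fun j hj => by rw [h j hj])
      (fun s s' h hk => ?_) (fun s s' _ hk => hk) (fun s s' h => h)
      (fun s s' h => by
        simp only [Prod.mk.injEq]
        exact ⟨ite_some_none_congr fun j hj => by rw [h j hj],
          ite_some_none_congr fun j hj => by rw [h j hj]⟩)
    have hV := eq_of_ite_some_none_eq hk fun j hj => by rw [h j hj]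
    simp only [hV, h i hi, Prod.mk.injEq, true_and]
    exact ite_some_none_congr fun j hj => by rw [h j (not_lt.2 hj)]

/-- Markov chain in the Mode 2 converse, step e: for i.i.d.
`{(X_i,Y_i,V_i)}` and `M := f(V_1,…,V_n)`, the Markov chains
`X_i ↔ (M, V_1^{i−1}, Y_1^n) ↔ X_1^{i−1}` and
`(X_i, M, Y_i^n) ↔ V_1^{i−1} ↔ (X_1^{i−1}, Y_1^{i−1})` hold for each `i`. -/
theorem mode2_converse_markov_step_e
    (p : 𝒳 × 𝒴 × 𝒱 → ℝ) (hp : IsPMF p) (n : ℕ)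
    (f : (Fin n → 𝒱) → ℳ) :
    ∀ i : Fin n,
      MarkovChain (iidPMF p n)
        (fun s => (s i).1)
        (fun s => (f (fun j => (s j).2.2),
          fun j : Fin n => if (j : ℕ) < (i : ℕ) then some ((s j).2.2) else none,
          fun j : Fin n => (s j).2.1))
        (fun s => fun j : Fin n => if (j : ℕ) < (i : ℕ) then some ((s j).1) else none) ∧
      MarkovChain (iidPMF p n)
        (fun s => ((s i).1, f (fun j => (s j).2.2),
          fun j : Fin n => if (i : ℕ) ≤ (j : ℕ) then some ((s j).2.1) else none))
        (fun s => fun j : Fin n => if (j : ℕ) < (i : ℕ) then some ((s j).2.2) else none)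
        (fun s => (fun j : Fin n => if (j : ℕ) < (i : ℕ) then some ((s j).1) else none,
          fun j : Fin n => if (j : ℕ) < (i : ℕ) then some ((s j).2.1) else none)) :=
  mode2_converse_markov_step_e_general p n f

end IID
end
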